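/- arXiv:0806.0073 — 3 statements merged into one kernel-verified Lean document; each statement's English description precedes it below -/
import Mathlib

section
/- Let w : (0,∞) → ℝ be integrable on (0,t) for every t > 0 with ‖w‖_W := sup_{t>0} |Pw(t) − w(t)| < ∞, and let 0 < θ < 1. Then t^θ·w(t) → 0 as t → 0⁺ and t^{−θ}·w(t) → 0 as t → ∞. -/
/-!
Writing `F(t) = ∫₀ᵗ w`, the average `Pw = F / t` is absolutely continuous on compact
subintervals of `(0, ∞)` with a.e. derivative `(w − Pw) / t`, which the hypothesis bounds by
`C / t`. Integrating, `|Pw(t) − Pw(1)| ≤ C |log t|`, hence `|w(t)| ≤ |Pw(1)| + C + C |log t|`,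
and a logarithm is killed by any positive power of `t` at `0` and at `∞`.
-/

open MeasureTheory Set Real Filter

/-- The averaging operator `Pw(t) = (1/t) ∫₀ᵗ w(s) ds`. -/
noncomputable def Pav (w : ℝ → ℝ) (t : ℝ) : ℝ := (1 / t) * ∫ s in Ioo (0 : ℝ) t, w s

open Topology

lemma Pav_eq_inv_mul_intervalIntegral (w : ℝ → ℝ) {t : ℝ} (ht : 0 ≤ t) :
    Pav w t = t⁻¹ * ∫ s in 0..t, w s := by
  rw [Pav, one_div, intervalIntegral.integral_of_le ht, integral_Ioc_eq_integral_Ioo]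

lemma ae_hasDerivAt_inv_mul_integral {w : ℝ → ℝ} {t : ℝ} (hw : IntervalIntegrable w volume 0 t) :
    ∀ᵐ x, x ∈ Ioc 0 t →
      HasDerivAt (fun x ↦ x⁻¹ * ∫ s in 0..x, w s) ((w x - Pav w x) / x) x := by
  filter_upwards [hw.ae_hasDerivAt_integral] with x hF hx
  have hx' : x ∈ uIcc 0 t := by
    rw [uIcc_of_le (hx.1.le.trans hx.2)]; exact Ioc_subset_Icc_self hx
  refine ((hasDerivAt_inv hx.1.ne').mul (hF hx' 0 left_mem_uIcc)).congr_deriv ?_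
  rw [Pav_eq_inv_mul_intervalIntegral w hx.1.le]
  field_simp [hx.1.ne']
  ring

lemma abs_Pav_sub_Pav_le {w : ℝ → ℝ} {C : ℝ}
    (hInt : ∀ t > (0 : ℝ), IntegrableOn w (Ioo 0 t))
    (hW : ∀ t > (0 : ℝ), |Pav w t - w t| ≤ C) {s t : ℝ} (hs : 0 < s) (hst : s ≤ t) :
    |Pav w t - Pav w s| ≤ C * log (t / s) := by
  have ht : 0 < t := hs.trans_le hst
  have hw : IntervalIntegrable w volume 0 t :=
    (intervalIntegrable_iff_integrableOn_Ioo_of_le ht.le).2 (hInt t ht)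
  have hpos : ∀ x ∈ uIcc s t, 0 < x := fun x hx ↦ by
    rw [uIcc_of_le hst] at hx; exact hs.trans_le hx.1
  have hac : AbsolutelyContinuousOnInterval (fun x ↦ x⁻¹ * ∫ r in 0..x, w r) s t := by
    have hsub : uIcc s t ⊆ uIcc 0 t :=
      uIcc_subset_uIcc (by rw [uIcc_of_le ht.le]; exact ⟨hs.le, hst⟩) right_mem_uIcc
    have hinv : ContDiffOn ℝ 1 (fun x : ℝ ↦ x⁻¹) (uIcc s t) :=
      (contDiffOn_inv ℝ).mono fun x hx ↦ (hpos x hx).ne'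
    exact hinv.absolutelyContinuousOnInterval.fun_mul
      ((hw.absolutelyContinuousOnInterval_intervalIntegral left_mem_uIcc).mono hsub)
  have hderiv : ∀ᵐ x, x ∈ Ioc s t → ‖deriv (fun x ↦ x⁻¹ * ∫ r in 0..x, w r) x‖ ≤ C * x⁻¹ := by
    filter_upwards [ae_hasDerivAt_inv_mul_integral hw] with x hx hxst
    have hx0 : 0 < x := hs.trans hxst.1
    rw [(hx ⟨hx0, hxst.2⟩).deriv, norm_div, Real.norm_eq_abs, Real.norm_eq_abs, abs_sub_comm,
      abs_of_pos hx0, div_eq_mul_inv]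
    exact mul_le_mul_of_nonneg_right (hW x hx0) (inv_nonneg.2 hx0.le)
  calc |Pav w t - Pav w s| = ‖∫ x in s..t, deriv (fun x ↦ x⁻¹ * ∫ r in 0..x, w r) x‖ := by
        rw [hac.integral_deriv_eq_sub, Pav_eq_inv_mul_intervalIntegral w ht.le,
          Pav_eq_inv_mul_intervalIntegral w hs.le, Real.norm_eq_abs]
    _ ≤ ∫ x in s..t, C * x⁻¹ :=
        intervalIntegral.norm_integral_le_of_norm_le hst hderiv
          ((intervalIntegral.intervalIntegrable_inv (fun x hx ↦ (hpos x hx).ne')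
            continuousOn_id).const_mul C)
    _ = C * log (t / s) := by rw [intervalIntegral.integral_const_mul, integral_inv_of_pos hs ht]

lemma abs_le_abs_Pav_one_add_mul_abs_log {w : ℝ → ℝ} {C : ℝ}
    (hInt : ∀ t > (0 : ℝ), IntegrableOn w (Ioo 0 t))
    (hW : ∀ t > (0 : ℝ), |Pav w t - w t| ≤ C) {t : ℝ} (ht : 0 < t) :
    |w t| ≤ (|Pav w 1| + C) + C * |log t| := by
  have hPav : |Pav w t - Pav w 1| ≤ C * |log t| := by
    rcases le_total 1 t with h | h
    · simpa [abs_of_nonneg (log_nonneg h)] using abs_Pav_sub_Pav_le hInt hW one_pos h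
    · rw [abs_sub_comm]
      simpa [abs_of_nonpos (log_nonpos ht.le h)] using abs_Pav_sub_Pav_le hInt hW ht h
  have hw := hW t ht
  rw [abs_le] at hPav hw ⊢
  constructor <;> linarith [le_abs_self (Pav w 1), neg_abs_le (Pav w 1)]

lemma tendsto_rpow_mul_nhdsGT_zero_of_abs_le {f : ℝ → ℝ} {A B θ : ℝ} (hθ : 0 < θ)
    (hf : ∀ t > 0, |f t| ≤ A + B * |log t|) :
    Tendsto (fun t ↦ t ^ θ * f t) (𝓝[>] 0) (𝓝 0) := by
  have hpow : Tendsto (fun t : ℝ ↦ t ^ θ) (𝓝[>] 0) (𝓝 0) := by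
    simpa [zero_rpow hθ.ne'] using
      (continuousAt_rpow_const 0 θ (Or.inr hθ.le)).tendsto.mono_left nhdsWithin_le_nhds
  have hlog := (tendsto_log_mul_rpow_nhdsGT_zero hθ).abs
  refine squeeze_zero_norm' ?_ (by simpa using (hpow.const_mul A).add (hlog.const_mul B))
  filter_upwards [self_mem_nhdsWithin] with t (ht : 0 < t)
  have hpos := rpow_pos_of_pos ht θ
  simp only [norm_mul, Real.norm_eq_abs, abs_of_pos hpos]
  linarith [mul_le_mul_of_nonneg_left (hf t ht) hpos.le]

lemma tendsto_rpow_neg_mul_atTop_of_abs_le {f : ℝ → ℝ} {A B θ : ℝ} (hθ : 0 < θ)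
    (hf : ∀ t > 0, |f t| ≤ A + B * |log t|) :
    Tendsto (fun t ↦ t ^ (-θ) * f t) atTop (𝓝 0) := by
  have hlog := (isLittleO_log_rpow_atTop hθ).tendsto_div_nhds_zero.abs
  refine squeeze_zero_norm' ?_
    (by simpa using ((tendsto_rpow_neg_atTop hθ).const_mul A).add (hlog.const_mul B))
  filter_upwards [eventually_gt_atTop 0] with t ht
  have hpos := rpow_pos_of_pos ht (-θ)
  simp only [norm_mul, Real.norm_eq_abs, div_eq_mul_inv, ← rpow_neg ht.le, abs_mul,
    abs_of_pos hpos]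
  linarith [mul_le_mul_of_nonneg_left (hf t ht) hpos.le]

theorem w_power_decay_general (w : ℝ → ℝ) (C θ : ℝ) (hθ0 : 0 < θ)
    (hInt : ∀ t > (0 : ℝ), IntegrableOn w (Ioo 0 t))
    (hW : ∀ t > (0 : ℝ), |Pav w t - w t| ≤ C) :
    Tendsto (fun t : ℝ => t ^ θ * w t) (nhdsWithin 0 (Ioi 0)) (nhds 0) ∧
    Tendsto (fun t : ℝ => t ^ (-θ) * w t) atTop (nhds 0) := by
  have hbound : ∀ t > 0, |w t| ≤ (|Pav w 1| + C) + C * |log t| :=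
    fun _ ↦ abs_le_abs_Pav_one_add_mul_abs_log hInt hW
  exact ⟨tendsto_rpow_mul_nhdsGT_zero_of_abs_le hθ0 hbound,
    tendsto_rpow_neg_mul_atTop_of_abs_le hθ0 hbound⟩

/-- If `w ∈ W` and `0 < θ < 1`, then `t^θ w(t) → 0` as `t → 0⁺`
and `t^{−θ} w(t) → 0` as `t → ∞`. -/
theorem w_power_decay (w : ℝ → ℝ) (C θ : ℝ) (hθ0 : 0 < θ) (hθ1 : θ < 1)
    (hInt : ∀ t > (0 : ℝ), IntegrableOn w (Ioo 0 t))
    (hW : ∀ t > (0 : ℝ), |Pav w t - w t| ≤ C) :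
    Tendsto (fun t : ℝ => t ^ θ * w t) (nhdsWithin 0 (Ioi 0)) (nhds 0) ∧
    Tendsto (fun t : ℝ => t ^ (-θ) * w t) atTop (nhds 0) :=
  w_power_decay_general w C θ hθ0 hInt hW
end

section
/- Let w : (0,∞) → ℝ be integrable on (0,t) for every t > 0 with ‖w‖_W := sup_{t>0} |Pw(t) − w(t)| ≤ C. Then w decomposes as w = u + v, where u = w − Pw satisfies |u(t)| ≤ C for all t > 0, and v = Pw satisfies the logarithmic Lipschitz estimate |v(b) − v(a)| ≤ C·|log(b/a)| for all a, b > 0. (This is the decomposition W = L^∞ + W₁.) -/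
/-!
For `a > 0` put `φ t = |Pw t - Pw a|`. Since `t Pw(t) = ∫₀ᵗ w`, one has
`t (Pw t - Pw a) = ∫ₐᵗ (w - Pw) + ∫ₐᵗ (Pw - Pw a)`, so `t φ t ≤ C (t - a) + ∫ₐᵗ φ`.
Equality in this integral inequality means `t φ' = C`, i.e. `φ t = C log (t / a)`, and a
comparison argument (the function `(∫ₐᵗ φ - C a) / t - C log t` is antitone, `Pw` being continuous)
shows that every continuous solution of the inequality stays below it.
-/

open MeasureTheory Set Real Filter

theorem le_mul_log_sub_of_mul_le_add_integral {φ : ℝ → ℝ} {a b C : ℝ} (ha : 0 < a)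
    (hab : a ≤ b) (hφ : ContinuousOn φ (Icc a b))
    (h : ∀ t ∈ Icc a b, t * φ t ≤ C * (t - a) + ∫ s in a..t, φ s) :
    φ b ≤ C * (log b - log a) := by
  have hb : 0 < b := ha.trans_le hab
  set ψ : ℝ → ℝ := fun t => ∫ s in a..t, φ s
  have hφi : IntegrableOn φ (uIcc a b) := by
    rw [uIcc_of_le hab]; exact hφ.integrableOn_Icc
  have hψ : ContinuousOn ψ (Icc a b) := by
    simpa only [uIcc_of_le hab] using intervalIntegral.continuousOn_primitive_interval hφi
  have hψ' : ∀ t ∈ Ioo a b, HasDerivAt ψ (φ t) t := fun t ht =>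
    intervalIntegral.integral_hasDerivAt_right
      (hφ.mono (by rw [uIcc_of_le ht.1.le]; exact Icc_subset_Icc le_rfl ht.2.le)
        ).intervalIntegrable
      (hφ.mono Ioo_subset_Icc_self |>.stronglyMeasurableAtFilter isOpen_Ioo t ht)
      (hφ.continuousAt (Icc_mem_nhds ht.1 ht.2))
  set g : ℝ → ℝ := fun t => (ψ t - C * a) / t - C * log t
  have hg : AntitoneOn g (Icc a b) := by
    refine antitoneOn_of_hasDerivWithinAt_nonpos (convex_Icc a b)
      (f' := fun t => (t * φ t - ψ t - C * (t - a)) / t ^ 2) ?_ (fun t ht => ?_) (fun t ht => ?_)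
    · exact ((hψ.sub continuousOn_const).div continuousOn_id
        fun t ht => (ha.trans_le ht.1).ne').sub
        (continuousOn_const.mul (continuousOn_log.mono fun t ht => (ha.trans_le ht.1).ne'))
    · rw [interior_Icc] at ht ⊢
      have ht0 : t ≠ 0 := (ha.trans ht.1).ne'
      have hg' := (((hψ' t ht).sub_const (C * a)).div (hasDerivAt_id' t) ht0).sub
        ((hasDerivAt_log ht0).const_mul C)
      refine (hg'.congr_deriv ?_).hasDerivWithinAt
      field_simp
      ring
    · rw [interior_Icc] at ht
      exact div_nonpos_of_nonpos_of_nonneg (by linarith [h t (Ioo_subset_Icc_self ht)])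
        (sq_nonneg t)
  have hga : g a = -C - C * log a := by
    simp only [g, ψ, intervalIntegral.integral_same, zero_sub, neg_div,
      mul_div_cancel_right₀ _ ha.ne']
  have hψb : ψ b - C * a ≤ b * (C * (log b - log a) - C) := by
    rw [← div_le_iff₀' hb]
    linarith [hg ⟨le_rfl, hab⟩ ⟨hab, le_rfl⟩ hab, hga]
  refine le_of_mul_le_mul_left ?_ hb
  linarith [h b ⟨hab, le_rfl⟩]

section Averaging

variable {w : ℝ → ℝ}

theorem intervalIntegrable_of_integrableOn_Ioo_zero
    (hInt : ∀ t > (0 : ℝ), IntegrableOn w (Ioo 0 t)) {a b : ℝ} (ha : 0 ≤ a) (hb : 0 ≤ b) :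
    IntervalIntegrable w volume a b := by
  have h0 : ∀ t, 0 ≤ t → IntervalIntegrable w volume 0 t := fun t ht =>
    (intervalIntegrable_iff_integrableOn_Ioo_of_le ht).2 <|
      (hInt (t + 1) (by linarith)).mono_set (Ioo_subset_Ioo_right (by linarith))
  exact (h0 a ha).symm.trans (h0 b hb)

theorem mul_Pav {t : ℝ} (ht : 0 < t) : t * Pav w t = ∫ s in (0 : ℝ)..t, w s := by
  rw [Pav, intervalIntegral.integral_of_le ht.le, integral_Ioc_eq_integral_Ioo]
  field_simp

theorem continuousOn_Pav (hInt : ∀ t > (0 : ℝ), IntegrableOn w (Ioo 0 t)) :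
    ContinuousOn (Pav w) (Ioi 0) := by
  intro t (ht : 0 < t)
  have hprim : ContinuousAt (fun x => ∫ s in (0 : ℝ)..x, w s) t := by
    refine (intervalIntegral.continuousOn_primitive_interval'
      (intervalIntegrable_of_integrableOn_Ioo_zero hInt le_rfl (by linarith : (0 : ℝ) ≤ t + 1))
      left_mem_uIcc).continuousAt ?_
    rw [uIcc_of_le (by linarith)]
    exact Icc_mem_nhds ht (by linarith)
  refine (((continuousAt_inv₀ ht.ne').mul hprim).congr_of_eventuallyEq ?_).continuousWithinAt
  filter_upwards [Ioi_mem_nhds ht] with x (hx : 0 < x)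
  rw [Pi.mul_apply, ← mul_Pav hx, inv_mul_cancel_left₀ hx.ne']

theorem mul_abs_Pav_sub_le {C : ℝ} (hInt : ∀ t > (0 : ℝ), IntegrableOn w (Ioo 0 t))
    (hW : ∀ t > (0 : ℝ), |Pav w t - w t| ≤ C) {a t : ℝ} (ha : 0 < a) (hat : a ≤ t) :
    t * |Pav w t - Pav w a| ≤ C * (t - a) + ∫ s in a..t, |Pav w s - Pav w a| := by
  have ht : 0 < t := ha.trans_le hat
  have hw : IntervalIntegrable w volume a t :=
    intervalIntegrable_of_integrableOn_Ioo_zero hInt ha.le ht.le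
  have hP : IntervalIntegrable (Pav w) volume a t := by
    refine ((continuousOn_Pav hInt).mono fun s hs => ?_).intervalIntegrable
    rw [uIcc_of_le hat] at hs
    exact ha.trans_le hs.1
  have hsplit : t * (Pav w t - Pav w a) =
      (∫ s in a..t, (w s - Pav w s)) + ∫ s in a..t, (Pav w s - Pav w a) := by
    rw [← intervalIntegral.integral_add (hw.sub hP) (hP.sub intervalIntegrable_const)]
    simp only [sub_add_sub_cancel]
    rw [intervalIntegral.integral_sub hw intervalIntegrable_const, intervalIntegral.integral_const,
      smul_eq_mul, ← intervalIntegral.integral_interval_sub_left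
        (intervalIntegrable_of_integrableOn_Ioo_zero hInt le_rfl ht.le)
        (intervalIntegrable_of_integrableOn_Ioo_zero hInt le_rfl ha.le), ← mul_Pav ht, ← mul_Pav ha]
    ring
  have hbound : |∫ s in a..t, (w s - Pav w s)| ≤ C * (t - a) := by
    have hpt : ∀ s ∈ uIoc a t, ‖w s - Pav w s‖ ≤ C := fun s hs => by
      rw [uIoc_of_le hat] at hs
      simpa only [Real.norm_eq_abs, abs_sub_comm] using hW s (ha.trans hs.1)
    simpa only [Real.norm_eq_abs, abs_of_nonneg (sub_nonneg.2 hat)] using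
      intervalIntegral.norm_integral_le_of_norm_le_const hpt
  calc t * |Pav w t - Pav w a| = |t * (Pav w t - Pav w a)| := by rw [abs_mul, abs_of_pos ht]
    _ ≤ |∫ s in a..t, (w s - Pav w s)| + |∫ s in a..t, (Pav w s - Pav w a)| :=
      hsplit ▸ abs_add_le _ _
    _ ≤ C * (t - a) + ∫ s in a..t, |Pav w s - Pav w a| :=
      add_le_add hbound (intervalIntegral.abs_integral_le_integral_abs hat)

theorem abs_Pav_sub_le_mul_log_sub {C : ℝ} (hInt : ∀ t > (0 : ℝ), IntegrableOn w (Ioo 0 t))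
    (hW : ∀ t > (0 : ℝ), |Pav w t - w t| ≤ C) {a b : ℝ} (ha : 0 < a) (hab : a ≤ b) :
    |Pav w b - Pav w a| ≤ C * (log b - log a) :=
  le_mul_log_sub_of_mul_le_add_integral ha hab
    (((continuousOn_Pav hInt).sub continuousOn_const).abs.mono fun _ ht => ha.trans_le ht.1)
    fun _ ht => mul_abs_Pav_sub_le hInt hW ha ht.1

end Averaging

/-- The decomposition `W = L^∞ + W₁`: if `‖w‖_W ≤ C` then `w = (w − Pw) + Pw`, where
`w − Pw` is bounded by `C` and `Pw` is logarithmically Lipschitz with constant `C`. -/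
theorem W_decomposition (w : ℝ → ℝ) (C : ℝ)
    (hInt : ∀ t > (0 : ℝ), IntegrableOn w (Ioo 0 t))
    (hW : ∀ t > (0 : ℝ), |Pav w t - w t| ≤ C) :
    (∀ t > (0 : ℝ), |w t - Pav w t| ≤ C) ∧
    (∀ a > (0 : ℝ), ∀ b > (0 : ℝ), |Pav w b - Pav w a| ≤ C * |Real.log (b / a)|) ∧
    (∀ t > (0 : ℝ), w t = (w t - Pav w t) + Pav w t) := by
  refine ⟨fun t ht => abs_sub_comm (w t) (Pav w t) ▸ hW t ht, fun a ha b hb => ?_,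
    fun t _ => (sub_add_cancel _ _).symm⟩
  rw [log_div hb.ne' ha.ne']
  rcases le_total a b with hab | hba
  · rw [abs_of_nonneg (sub_nonneg.2 (log_le_log ha hab))]
    exact abs_Pav_sub_le_mul_log_sub hInt hW ha hab
  · rw [abs_sub_comm, abs_sub_comm (log b), abs_of_nonneg (sub_nonneg.2 (log_le_log hb hba))]
    exact abs_Pav_sub_le_mul_log_sub hInt hW hb hba
end

section
/- Let φ : ℝ → ℝ be Lipschitz with constant L, and define w(t) = φ(log t) for t > 0. Then w is integrable on (0,t) for every t > 0 and |Pw(t) − w(t)| ≤ L for all t > 0; that is, w ∈ W with ‖w‖_W ≤ L. -/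
/-!
For `0 < s < t` the Lipschitz bound gives `|φ (log s) - φ (log t)| ≤ L * (log t - log s)`, and
`log t - log s` has average exactly `1` over `(0, t)` because `∫₀ᵗ log s ds = t log t - t`.
Integrability follows from `|φ x| ≤ |φ 0| + L |x|` and the integrability of `log` near `0`.
-/

open MeasureTheory Set Real Filter

theorem LipschitzWith.integrable_comp {α E F : Type*} [MeasurableSpace α] {μ : Measure α}
    [IsFiniteMeasure μ] [NormedAddCommGroup E] [NormedAddCommGroup F] {K : NNReal} {g : E → F}
    {f : α → E} (hg : LipschitzWith K g) (hf : Integrable f μ) : Integrable (g ∘ f) μ := by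
  refine ((integrable_const ‖g 0‖).add (hf.norm.const_mul K)).mono'
    (hg.continuous.comp_aestronglyMeasurable hf.1) (ae_of_all _ fun x => ?_)
  calc ‖g (f x)‖ ≤ ‖g 0‖ + ‖g (f x) - g 0‖ := norm_le_insert' _ _
    _ ≤ ‖g 0‖ + K * ‖f x‖ := by simpa using hg.norm_sub_le (f x) 0

theorem integrableOn_log_Ioo (t : ℝ) : IntegrableOn log (Ioo 0 t) := by
  rcases le_total 0 t with ht | ht
  · exact (intervalIntegrable_iff_integrableOn_Ioo_of_le ht).mp
      intervalIntegral.intervalIntegrable_log'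
  · simp [Ioo_eq_empty_of_le ht]

theorem Pav_const {t : ℝ} (ht : 0 < t) (c : ℝ) : Pav (fun _ => c) t = c := by
  simp [Pav, ht.le, ht.ne']

theorem Pav_sub {w v : ℝ → ℝ} {t : ℝ} (hw : IntegrableOn w (Ioo 0 t))
    (hv : IntegrableOn v (Ioo 0 t)) : Pav (fun s => w s - v s) t = Pav w t - Pav v t := by
  simp only [Pav, integral_sub hw hv, mul_sub]

theorem Pav_const_mul (c : ℝ) (w : ℝ → ℝ) (t : ℝ) :
    Pav (fun s => c * w s) t = c * Pav w t := by
  simp only [Pav, integral_const_mul]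
  ring

theorem abs_Pav_le {w g : ℝ → ℝ} {t : ℝ} (ht : 0 < t) (hg : IntegrableOn g (Ioo 0 t))
    (h : ∀ s ∈ Ioo 0 t, |w s| ≤ g s) : |Pav w t| ≤ Pav g t := by
  rw [Pav, Pav, abs_mul, abs_of_pos (one_div_pos.mpr ht)]
  gcongr
  exact norm_integral_le_of_norm_le (f := w) hg
    ((ae_restrict_iff' measurableSet_Ioo).mpr (ae_of_all _ h))

theorem abs_Pav_sub_le {w g : ℝ → ℝ} {t c : ℝ} (ht : 0 < t) (hw : IntegrableOn w (Ioo 0 t))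
    (hg : IntegrableOn g (Ioo 0 t)) (h : ∀ s ∈ Ioo 0 t, |w s - c| ≤ g s) :
    |Pav w t - c| ≤ Pav g t := by
  rw [← Pav_const ht c, ← Pav_sub hw (integrable_const c)]
  exact abs_Pav_le ht hg h

theorem Pav_log_sub_log {t : ℝ} (ht : 0 < t) : Pav (fun s => log t - log s) t = 1 := by
  rw [Pav_sub (integrable_const (log t)) (integrableOn_log_Ioo t), Pav_const ht, Pav,
    ← integral_Ioc_eq_integral_Ioo, ← intervalIntegral.integral_of_le ht.le, integral_log]
  field_simp
  ring

/-- If `φ` is Lipschitz with constant `L`, then `w(t) = φ(log t)` belongs to `W`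
with `‖w‖_W ≤ L`. -/
theorem lipschitz_log_mem_W (φ : ℝ → ℝ) (L : NNReal) (hφ : LipschitzWith L φ) :
    (∀ t > (0 : ℝ), IntegrableOn (fun s => φ (Real.log s)) (Ioo 0 t)) ∧
      ∀ t > (0 : ℝ),
        |Pav (fun s => φ (Real.log s)) t - φ (Real.log t)| ≤ (L : ℝ) := by
  have hint (t : ℝ) : IntegrableOn (fun s => φ (log s)) (Ioo 0 t) :=
    hφ.integrable_comp (integrableOn_log_Ioo t)
  refine ⟨fun t _ => hint t, fun t ht => ?_⟩
  have hdev : ∀ s ∈ Ioo 0 t, |φ (log s) - φ (log t)| ≤ L * (log t - log s) := by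
    intro s hs
    have hlog : log s ≤ log t := log_le_log hs.1 hs.2.le
    simpa [Real.dist_eq, abs_of_nonpos (sub_nonpos.2 hlog)] using hφ.dist_le_mul (log s) (log t)
  have hmajorant : IntegrableOn (fun s => L * (log t - log s)) (Ioo 0 t) :=
    ((integrable_const (log t)).sub (integrableOn_log_Ioo t)).const_mul L
  calc _ ≤ Pav (fun s => L * (log t - log s)) t := abs_Pav_sub_le ht (hint t) hmajorant hdev
    _ = L := by rw [Pav_const_mul, Pav_log_sub_log ht, mul_one]
end
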